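/- Suppose D(q,p) + K_P is positive definite for every (q,p). If t ↦ (q(t), p(t)) is a differentiable solution on all of ℝ of the closed-loop system q̇ = M(q)⁻¹ p, ṗ = −∇_q H_d(q,p) − (D(q,p) + K_P) M(q)⁻¹ p, and if the function t ↦ H_d(q(t), p(t)) is constant, then (q(t), p(t)) = (q⋆, 0) for all t. -/

import Mathlib

open Matrix

/-- The `i`-th component of the gradient of a scalar function on `ℝⁿ`. -/
noncomputable def grad {n : ℕ} (f : (Fin n → ℝ) → ℝ) (x : Fin n → ℝ) : Fin n → ℝ :=
  fun i => fderiv ℝ f x (Pi.single i 1)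

/-- The desired (shaped) Hamiltonian
`H_d(q,p) = ½ pᵀ M(q)⁻¹ p + ½ (q−q⋆)ᵀ K_I (q−q⋆) + Σᵢ (kᵢ/μᵢ) ln cosh(μᵢ(qᵢ−q⋆ᵢ))`. -/
noncomputable def Hdes {n : ℕ} (M : (Fin n → ℝ) → Matrix (Fin n) (Fin n) ℝ)
    (KI : Matrix (Fin n) (Fin n) ℝ) (k μ qstar : Fin n → ℝ) (q p : Fin n → ℝ) : ℝ :=
  (1 / 2) * (p ⬝ᵥ ((M q)⁻¹ *ᵥ p)) + (1 / 2) * ((q - qstar) ⬝ᵥ (KI *ᵥ (q - qstar)))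
    + ∑ i, (k i / μ i) * Real.log (Real.cosh (μ i * (q i - qstar i)))

/-!
Along the closed loop, `∇_p H_d = M⁻¹p` and the chain rule give
`d/dt H_d = -(M⁻¹p)ᵀ (D + K_P) (M⁻¹p)`, so constancy of `H_d` forces `M⁻¹p ≡ 0`, i.e. `p ≡ 0`.
Then `ṗ ≡ 0` and the closed loop reduces to `∇_q H_d(q, 0) = 0`. But the derivative of
`H_d(·, 0)` at `q` in the direction `y = q - q⋆` is `yᵀ K_I y + Σᵢ (kᵢ/μᵢ) uᵢ tanh uᵢ` with
`uᵢ = μᵢ yᵢ`, which is positive unless `y = 0`.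
-/

theorem Real.hasDerivAt_log_cosh (x : ℝ) :
    HasDerivAt (fun x => Real.log (Real.cosh x)) (Real.tanh x) x := by
  simpa [Real.tanh_eq_sinh_div_cosh] using (Real.hasDerivAt_cosh x).log (Real.cosh_pos x).ne'

theorem Real.mul_tanh_nonneg (x : ℝ) : 0 ≤ x * Real.tanh x := by
  rw [Real.tanh_eq_sinh_div_cosh, ← mul_div_assoc]
  refine div_nonneg ?_ (Real.cosh_pos x).le
  rcases le_total 0 x with hx | hx
  · exact mul_nonneg hx (Real.sinh_nonneg_iff.2 hx)
  · exact mul_nonneg_of_nonpos_of_nonpos hx (Real.sinh_nonpos_iff.2 hx)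

theorem hasLineDerivAt_dotProduct_mulVec_self {ι : Type*} [Fintype ι]
    (S : Matrix ι ι ℝ) (x v : ι → ℝ) :
    HasLineDerivAt ℝ (fun y => y ⬝ᵥ S *ᵥ y) (x ⬝ᵥ S *ᵥ v + v ⬝ᵥ S *ᵥ x) x v := by
  classical
  have hQ : ⇑S.toQuadraticForm' = fun y => y ⬝ᵥ S *ᵥ y := by
    ext y
    simp [Matrix.toQuadraticForm', Matrix.toLinearMap₂'_apply']
  have h := S.toQuadraticForm'.hasLineDerivAt x v
  rw [hQ] at h
  convert h using 1
  simp only [QuadraticMap.polar, mulVec_add, dotProduct_add, add_dotProduct]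
  ring

section MatrixInverse

variable {E : Type*} [NormedAddCommGroup E] [NormedSpace ℝ E] {ι : Type*} [Fintype ι]
  [DecidableEq ι] {A : E → Matrix ι ι ℝ} {x : E}

theorem differentiableAt_det (hA : ∀ i j, DifferentiableAt ℝ (fun y => A y i j) x) :
    DifferentiableAt ℝ (fun y => (A y).det) x := by
  simp only [det_apply]
  fun_prop

theorem differentiableAt_inv_apply (hA : ∀ i j, DifferentiableAt ℝ (fun y => A y i j) x)
    (hx : (A x).det ≠ 0) (i j : ι) : DifferentiableAt ℝ (fun y => (A y)⁻¹ i j) x := by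
  have hcramer : (fun y => (A y)⁻¹ i j)
      = fun y => ((A y).det)⁻¹ * ((A y).updateRow j (Pi.single i 1)).det := by
    ext y
    simp [inv_def, Ring.inverse_eq_inv', adjugate_apply]
  rw [hcramer]
  refine (differentiableAt_det hA).inv hx |>.mul (differentiableAt_det fun a b => ?_)
  by_cases h : a = j
  · subst h
    simp
  · simpa [updateRow_ne h] using hA a b

end MatrixInverse

section Gradient

variable {n : ℕ}

theorem fderiv_apply_eq_dotProduct_grad (f : (Fin n → ℝ) → ℝ) (x v : Fin n → ℝ) :
    fderiv ℝ f x v = v ⬝ᵥ grad f x := by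
  conv_lhs => rw [pi_eq_sum_univ' v]
  simp [dotProduct, grad]

theorem dotProduct_grad_eq_of_hasLineDerivAt {f : (Fin n → ℝ) → ℝ} {x v : Fin n → ℝ} {d : ℝ}
    (hf : DifferentiableAt ℝ f x) (h : HasLineDerivAt ℝ f d x v) : v ⬝ᵥ grad f x = d := by
  rw [← fderiv_apply_eq_dotProduct_grad]
  exact (hf.hasFDerivAt.hasLineDerivAt v).unique h

theorem hasDerivAt_comp_prodMk_grad {m : ℕ} {F : (Fin n → ℝ) → (Fin m → ℝ) → ℝ}
    {q : ℝ → Fin n → ℝ} {p : ℝ → Fin m → ℝ} {q' : Fin n → ℝ} {p' : Fin m → ℝ} {t : ℝ}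
    (hF : DifferentiableAt ℝ (Function.uncurry F) (q t, p t))
    (hq : HasDerivAt q q' t) (hp : HasDerivAt p p' t) :
    HasDerivAt (fun s => F (q s) (p s))
      (q' ⬝ᵥ grad (F · (p t)) (q t) + p' ⬝ᵥ grad (F (q t)) (p t)) t := by
  set L := fderiv ℝ (Function.uncurry F) (q t, p t)
  have hL : HasFDerivAt (Function.uncurry F) L (q t, p t) := hF.hasFDerivAt
  have hleft : HasFDerivAt (F · (p t)) (L.comp (.inl ℝ _ _)) (q t) :=
    HasFDerivAt.comp (g := Function.uncurry F) (q t) hL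
      (hasFDerivAt_prodMk_left (𝕜 := ℝ) (q t) (p t))
  have hright : HasFDerivAt (F (q t)) (L.comp (.inr ℝ _ _)) (p t) :=
    hL.comp (p t) (hasFDerivAt_prodMk_right (𝕜 := ℝ) (q t) (p t))
  refine (hL.comp_hasDerivAt t (hq.prodMk hp)).congr_deriv ?_
  rw [← fderiv_apply_eq_dotProduct_grad, ← fderiv_apply_eq_dotProduct_grad, hleft.fderiv,
    hright.fderiv]
  simp [← map_add]

theorem grad_half_dotProduct_mulVec_self_add_const {S : Matrix (Fin n) (Fin n) ℝ}
    (hS : S.IsSymm) (c : ℝ) (x : Fin n → ℝ) :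
    grad (fun y => 1 / 2 * (y ⬝ᵥ S *ᵥ y) + c) x = S *ᵥ x := by
  ext i
  have hdiff : DifferentiableAt ℝ (fun y : Fin n → ℝ => 1 / 2 * (y ⬝ᵥ S *ᵥ y) + c) x := by
    simp only [dotProduct, mulVec]
    fun_prop
  have hline : HasLineDerivAt ℝ (fun y => 1 / 2 * (y ⬝ᵥ S *ᵥ y) + c)
      (1 / 2 * (x ⬝ᵥ S *ᵥ Pi.single i 1 + Pi.single i 1 ⬝ᵥ S *ᵥ x)) x (Pi.single i 1) :=
    ((hasLineDerivAt_dotProduct_mulVec_self S x _).const_mul _).add_const c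
  rw [← single_one_dotProduct i (grad _ x), dotProduct_grad_eq_of_hasLineDerivAt hdiff hline,
    ← dotProduct_transpose_mulVec, hS.eq, single_one_dotProduct]
  ring

end Gradient

section Hamiltonian

variable {n : ℕ} {M : (Fin n → ℝ) → Matrix (Fin n) (Fin n) ℝ} {KI : Matrix (Fin n) (Fin n) ℝ}
  {k μ qstar : Fin n → ℝ}

theorem Hdes_eq_add_Hdes_zero (q p : Fin n → ℝ) :
    Hdes M KI k μ qstar q p = 1 / 2 * (p ⬝ᵥ (M q)⁻¹ *ᵥ p) + Hdes M KI k μ qstar q 0 := by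
  simp [Hdes, add_assoc]

theorem differentiable_Hdes_zero : Differentiable ℝ (fun q => Hdes M KI k μ qstar q 0) := by
  simp only [Hdes, zero_dotProduct, mul_zero, zero_add]
  simp only [dotProduct, mulVec, Pi.sub_apply]
  fun_prop (disch := intro; exact (Real.cosh_pos _).ne')

theorem differentiableAt_uncurry_Hdes {x y : Fin n → ℝ}
    (hM : ∀ i j, DifferentiableAt ℝ (fun q => M q i j) x) (hx : (M x).det ≠ 0) :
    DifferentiableAt ℝ (Function.uncurry (Hdes M KI k μ qstar)) (x, y) := by
  have hinv : ∀ i j, DifferentiableAt ℝ (fun z : (Fin n → ℝ) × (Fin n → ℝ) => (M z.1)⁻¹ i j)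
      (x, y) :=
    differentiableAt_inv_apply
      (fun i j => DifferentiableAt.comp (g := (M · i j)) (x, y) (hM i j) differentiableAt_fst) hx
  have hsnd : ∀ i, DifferentiableAt ℝ (fun z : (Fin n → ℝ) × (Fin n → ℝ) => z.2 i) (x, y) :=
    fun i => by fun_prop
  have hsplit : Function.uncurry (Hdes M KI k μ qstar)
      = fun z => 1 / 2 * (z.2 ⬝ᵥ (M z.1)⁻¹ *ᵥ z.2) + Hdes M KI k μ qstar z.1 0 :=
    funext fun z => Hdes_eq_add_Hdes_zero z.1 z.2
  rw [hsplit]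
  refine DifferentiableAt.add ?_ (differentiable_Hdes_zero.comp differentiable_fst (x, y))
  simp only [dotProduct, mulVec]
  exact (DifferentiableAt.fun_sum fun i _ => (hsnd i).mul
    (DifferentiableAt.fun_sum fun j _ => (hinv i j).mul (hsnd j))).const_mul _

theorem grad_Hdes_right {q : Fin n → ℝ} (hM : ((M q)⁻¹).IsSymm) (p : Fin n → ℝ) :
    grad (Hdes M KI k μ qstar q) p = (M q)⁻¹ *ᵥ p := by
  have hsplit : Hdes M KI k μ qstar q
      = fun y => 1 / 2 * (y ⬝ᵥ (M q)⁻¹ *ᵥ y) + Hdes M KI k μ qstar q 0 :=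
    funext (Hdes_eq_add_Hdes_zero q)
  rw [hsplit, grad_half_dotProduct_mulVec_self_add_const hM]

theorem hasDerivAt_Hdes_of_closedLoop {A : Matrix (Fin n) (Fin n) ℝ} {q p : ℝ → Fin n → ℝ}
    {t : ℝ} (hF : DifferentiableAt ℝ (Function.uncurry (Hdes M KI k μ qstar)) (q t, p t))
    (hM : ((M (q t))⁻¹).IsSymm) (hq : HasDerivAt q ((M (q t))⁻¹ *ᵥ p t) t)
    (hp : HasDerivAt p (-grad (Hdes M KI k μ qstar · (p t)) (q t)
      - A *ᵥ ((M (q t))⁻¹ *ᵥ p t)) t) :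
    HasDerivAt (fun s => Hdes M KI k μ qstar (q s) (p s))
      (-((M (q t))⁻¹ *ᵥ p t ⬝ᵥ A *ᵥ ((M (q t))⁻¹ *ᵥ p t))) t := by
  refine (hasDerivAt_comp_prodMk_grad hF hq hp).congr_deriv ?_
  rw [grad_Hdes_right hM, sub_dotProduct, neg_dotProduct, dotProduct_comm _ (grad _ _),
    dotProduct_comm (A *ᵥ _)]
  ring

theorem hasLineDerivAt_Hdes_zero_sub (x : Fin n → ℝ) :
    HasLineDerivAt ℝ (fun q => Hdes M KI k μ qstar q 0)
      ((x - qstar) ⬝ᵥ KI *ᵥ (x - qstar)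
        + ∑ i, k i / μ i * (μ i * (x - qstar) i * Real.tanh (μ i * (x - qstar) i)))
      x (x - qstar) := by
  have hpt : ∀ s : ℝ, x + s • (x - qstar) - qstar = (1 + s) • (x - qstar) := fun s => by module
  have hpt_apply : ∀ (s : ℝ) i, x i + s * (x - qstar) i - qstar i = (1 + s) * (x - qstar) i :=
    fun s i => by simp only [Pi.sub_apply]; ring
  unfold HasLineDerivAt
  simp only [Hdes, zero_dotProduct, mul_zero, zero_add, hpt, mulVec_smul, dotProduct_smul,
    smul_dotProduct, smul_eq_mul, Pi.add_apply, Pi.smul_apply, hpt_apply]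
  have hline : HasDerivAt (fun s : ℝ => 1 + s) 1 0 := (hasDerivAt_id 0).const_add 1
  have hquad := (hline.mul (hline.mul_const ((x - qstar) ⬝ᵥ KI *ᵥ (x - qstar)))).const_mul (1 / 2)
  have hsum := HasDerivAt.fun_sum (u := Finset.univ) fun i _ =>
    ((Real.hasDerivAt_log_cosh _).comp 0
      ((hline.mul_const ((x - qstar) i)).const_mul (μ i))).const_mul (k i / μ i)
  refine (hquad.add hsum).congr_deriv ?_
  simp only [add_zero, one_mul]
  congr 1
  · ring
  · exact Finset.sum_congr rfl fun i _ => by ring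

theorem eq_of_grad_Hdes_zero_eq_zero (hKI : KI.PosDef) (hkμ : ∀ i, 0 ≤ k i / μ i)
    {x : Fin n → ℝ} (h : grad (fun q => Hdes M KI k μ qstar q 0) x = 0) : x = qstar := by
  by_contra hne
  have hradial : (x - qstar) ⬝ᵥ grad (fun q => Hdes M KI k μ qstar q 0) x = _ :=
    dotProduct_grad_eq_of_hasLineDerivAt (differentiable_Hdes_zero x)
      (hasLineDerivAt_Hdes_zero_sub x)
  rw [h, dotProduct_zero] at hradial
  have hquad := hKI.dotProduct_mulVec_pos (sub_ne_zero.2 hne)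
  rw [star_trivial] at hquad
  have hsum : 0 ≤ ∑ i, k i / μ i * (μ i * (x - qstar) i * Real.tanh (μ i * (x - qstar) i)) :=
    Finset.sum_nonneg fun i _ => mul_nonneg (hkμ i) (Real.mul_tanh_nonneg _)
  linarith

end Hamiltonian

theorem lasalle_invariant_set_general {n : ℕ} (qstar : Fin n → ℝ)
    (M : (Fin n → ℝ) → Matrix (Fin n) (Fin n) ℝ)
    (hM : ∀ i j, ContDiff ℝ 2 (fun q => M q i j))
    (hMpd : ∀ q, (M q).PosDef)
    (D : (Fin n → ℝ) → (Fin n → ℝ) → Matrix (Fin n) (Fin n) ℝ)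
    (KP KI : Matrix (Fin n) (Fin n) ℝ) (hKI : KI.PosDef)
    (hDKP : ∀ q p, (D q p + KP).PosDef)
    (k μ : Fin n → ℝ) (hk : ∀ i, 0 < k i) (hμ : ∀ i, 0 < μ i)
    (q p : ℝ → Fin n → ℝ) (hq : Differentiable ℝ q) (hp : Differentiable ℝ p)
    (hqdot : ∀ t, deriv q t = (M (q t))⁻¹ *ᵥ p t)
    (hpdot : ∀ t, deriv p t =
      -(grad (fun q' => Hdes M KI k μ qstar q' (p t)) (q t))
        - (D (q t) (p t) + KP) *ᵥ ((M (q t))⁻¹ *ᵥ p t))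
    (hconst : ∀ t : ℝ, Hdes M KI k μ qstar (q t) (p t)
      = Hdes M KI k μ qstar (q 0) (p 0)) :
    ∀ t : ℝ, q t = qstar ∧ p t = 0 := by
  have hsymm : ∀ x, ((M x)⁻¹).IsSymm := fun x =>
    isHermitian_iff_isSymm.1 (hMpd x).isHermitian.inv
  have hdiff : ∀ x y, DifferentiableAt ℝ (Function.uncurry (Hdes M KI k μ qstar)) (x, y) :=
    fun x y => differentiableAt_uncurry_Hdes
      (fun i j => (hM i j).contDiffAt.differentiableAt (by norm_num)) (hMpd x).det_pos.ne'
  have hp_zero : ∀ t, p t = 0 := by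
    intro t
    have hdiss := hasDerivAt_Hdes_of_closedLoop (hdiff _ _) (hsymm _)
      (hqdot t ▸ (hq t).hasDerivAt) (hpdot t ▸ (hp t).hasDerivAt)
    have hstat : HasDerivAt (fun s => Hdes M KI k μ qstar (q s) (p s)) 0 t :=
      (hasDerivAt_const t _).congr_of_eventuallyEq (.of_forall hconst)
    have hv : (M (q t))⁻¹ *ᵥ p t = 0 := by
      by_contra hv
      have hpos := (hDKP (q t) (p t)).dotProduct_mulVec_pos hv
      rw [star_trivial] at hpos
      linarith [hdiss.unique hstat]
    exact eq_zero_of_mulVec_eq_zero (hMpd (q t)).inv.det_pos.ne' hv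
  intro t
  have hgrad : grad (fun x => Hdes M KI k μ qstar x 0) (q t) = 0 := by
    simpa only [funext hp_zero, deriv_const, mulVec_zero, sub_zero, zero_eq_neg] using hpdot t
  exact ⟨eq_of_grad_Hdes_zero_eq_zero hKI (fun i => div_nonneg (hk i).le (hμ i).le) hgrad,
    hp_zero t⟩

/-- LaSalle invariance argument: if `D(q,p) + K_P ≻ 0` everywhere and
`t ↦ H_d(q(t),p(t))` is constant along a global differentiable solution of the closed loop
`q̇ = M(q)⁻¹ p`, `ṗ = −∇_q H_d − (D + K_P) M(q)⁻¹ p`, then `(q(t),p(t)) = (q⋆,0)` for all `t`. -/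
theorem lasalle_invariant_set {n : ℕ} (hn : 1 ≤ n) (qstar : Fin n → ℝ)
    (M : (Fin n → ℝ) → Matrix (Fin n) (Fin n) ℝ)
    (hM : ∀ i j, ContDiff ℝ 2 (fun q => M q i j))
    (hMpd : ∀ q, (M q).PosDef)
    (D : (Fin n → ℝ) → (Fin n → ℝ) → Matrix (Fin n) (Fin n) ℝ)
    (hD : ∀ q p, (D q p).PosSemidef)
    (KP KI : Matrix (Fin n) (Fin n) ℝ) (hKP : KP.PosDef) (hKI : KI.PosDef)
    (hDKP : ∀ q p, (D q p + KP).PosDef)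
    (k μ : Fin n → ℝ) (hk : ∀ i, 0 < k i) (hμ : ∀ i, 0 < μ i)
    (q p : ℝ → Fin n → ℝ) (hq : Differentiable ℝ q) (hp : Differentiable ℝ p)
    (hqdot : ∀ t, deriv q t = (M (q t))⁻¹ *ᵥ p t)
    (hpdot : ∀ t, deriv p t =
      -(grad (fun q' => Hdes M KI k μ qstar q' (p t)) (q t))
        - (D (q t) (p t) + KP) *ᵥ ((M (q t))⁻¹ *ᵥ p t))
    (hconst : ∀ t : ℝ, Hdes M KI k μ qstar (q t) (p t)
      = Hdes M KI k μ qstar (q 0) (p 0)) :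
    ∀ t : ℝ, q t = qstar ∧ p t = 0 :=
  lasalle_invariant_set_general qstar M hM hMpd D KP KI hKI hDKP k μ hk hμ q p hq hp hqdot hpdot
    hconst
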